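/- arXiv:2008.04173 — 2 statements merged into one kernel-verified Lean document; each statement's English description precedes it below -/
import Mathlib

section
/- Let y be dominant, and let K and K' be arcs, each with at least two elements, such that K ∩ K' = ∅, K ∪ K' ≠ ℤ/(n+1)ℤ, and K ∪ K' induces a connected subgraph of the (n+1)-cycle; let i ∈ K and j ∈ K' be the unique pair of adjacent elements of K and K'. Suppose x := y − χ_K and x' := y − χ_{K'} are dominant and y covers both x and x'. Then the interval of dominant vectors between the componentwise minimum of x and x' and y has exactly seven elements: {z ∈ ℤ^{n+1} : z dominant and y − χ_K − χ_{K'} ≤ z ≤ y} = {y, y − χ_K, y − χ_{K'}, y − e_i − e_j, y − χ_K − e_j, y − χ_{K'} − e_i, y − χ_K − χ_{K'}}. -/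
/-- Cartan matrix of affine type `A_n^{(1)}`, indexed by `ℤ/(n+1)ℤ`:
`A i i = 2`, `A i j = -1` if `j ≡ i ± 1`, and `0` otherwise. -/
def cartanA (n : ℕ) : Matrix (ZMod (n + 1)) (ZMod (n + 1)) ℤ :=
  Matrix.of fun i j => if i = j then 2 else if j = i + 1 ∨ j = i - 1 then -1 else 0

/-- Value of the level-`m` weight `m·ω₀ + Σᵢ xᵢ·αᵢ` on the coroot `αⱼ^∨`. -/
def vA (n : ℕ) (m : ℤ) (x : ZMod (n + 1) → ℤ) (j : ZMod (n + 1)) : ℤ :=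
  m * (if j = 0 then 1 else 0) + (cartanA n).mulVec x j

/-- Dominance of the coefficient vector `x`. -/
def DomA (n : ℕ) (m : ℤ) (x : ZMod (n + 1) → ℤ) : Prop :=
  ∀ j, 0 ≤ vA n m x j

/-- `y` covers `x` in the componentwise (dominance) order on dominant vectors:
both are dominant, `x < y`, and no dominant `z` lies strictly between them. -/
def CoversA (n : ℕ) (m : ℤ) (x y : ZMod (n + 1) → ℤ) : Prop :=
  DomA n m x ∧ DomA n m y ∧ x < y ∧ ¬∃ z, DomA n m z ∧ x < z ∧ z < y

/-- The `(n+1)`-cycle graph on `ℤ/(n+1)ℤ` (`j` adjacent to `j ± 1`). -/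
def cycleG (n : ℕ) : SimpleGraph (ZMod (n + 1)) :=
  SimpleGraph.fromRel fun i j => j = i + 1

/-- An arc: a nonempty proper subset of `ℤ/(n+1)ℤ` whose induced subgraph in the
`(n+1)`-cycle is connected. -/
def IsArc (n : ℕ) (K : Set (ZMod (n + 1))) : Prop :=
  K.Nonempty ∧ K ≠ Set.univ ∧ ((cycleG n).induce K).Connected

/-- Indicator vector `χ_K` of a subset `K`, encoding the highest root `α_K`. -/
noncomputable def chi (n : ℕ) (K : Set (ZMod (n + 1))) : ZMod (n + 1) → ℤ :=
  K.indicator 1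

/-- The `i`-th standard basis vector, encoding the simple root `αᵢ`. -/
def eA (n : ℕ) (i : ZMod (n + 1)) : ZMod (n + 1) → ℤ :=
  fun j => if j = i then 1 else 0

section Helpers
variable {n : ℕ}

lemma castinj {a b : ℕ} (ha : a < n+1) (hb : b < n+1) (h : (a : ZMod (n+1)) = b) : a = b := by
  have := congrArg ZMod.val h
  rwa [ZMod.val_cast_of_lt ha, ZMod.val_cast_of_lt hb] at this

lemma cast_val_eq (u : ZMod (n+1)) : ((u.val : ℕ) : ZMod (n+1)) = u :=
  ZMod.natCast_rightInverse u

lemma val_le (u : ZMod (n+1)) : u.val ≤ n := Nat.lt_succ_iff.mp (ZMod.val_lt u)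

lemma cast_eq_iff (u : ZMod (n+1)) {t : ℕ} (ht : t < n+1) : u = (t : ZMod (n+1)) ↔ u.val = t := by
  constructor
  · intro h; rw [h, ZMod.val_cast_of_lt ht]
  · intro h; rw [← h, cast_val_eq]

lemma val_add_nat (u : ZMod (n+1)) (a : ℕ) :
    (u + (a : ZMod (n+1))).val = (u.val + a) % (n+1) := by
  conv_lhs => rw [← cast_val_eq u]
  rw [← Nat.cast_add, ZMod.val_natCast]

lemma val_sub_nat (u : ZMod (n+1)) {a : ℕ} (ha : a ≤ n+1) :
    (u - (a : ZMod (n+1))).val = (u.val + (n+1) - a) % (n+1) := by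
  have hz : ((n : ZMod (n+1)) + 1) = 0 := by
    have := ZMod.natCast_self (n+1); push_cast at this; exact this
  have key : u - (a : ZMod (n+1)) = ((u.val + (n+1) - a : ℕ) : ZMod (n+1)) := by
    have h2 : (u.val + (n+1) - a) + a = u.val + (n+1) := by omega
    have h3 := congrArg (fun t : ℕ => (t : ZMod (n+1))) h2
    push_cast at h3
    have c1 := cast_val_eq u
    linear_combination -h3 - c1 - hz
  rw [key, ZMod.val_natCast]

lemma val_add_one (u : ZMod (n+1)) :
    (u + 1).val = if u.val = n then 0 else u.val + 1 := by
  have h := val_add_nat u 1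
  push_cast at h
  rw [h]
  have := val_le u
  split_ifs with h1
  · rw [h1]; simp
  · rw [Nat.mod_eq_of_lt (by omega)]

lemma val_sub_one (u : ZMod (n+1)) :
    (u - 1).val = if u.val = 0 then n else u.val - 1 := by
  have h := val_sub_nat u (a := 1) (by omega)
  push_cast at h
  rw [h]
  have := val_le u
  split_ifs with h1
  · have e : u.val + (n+1) - 1 = n := by omega
    rw [e, Nat.mod_eq_of_lt (by omega)]
  · have e : u.val + (n+1) - 1 = (u.val - 1) + (n+1) := by omega
    rw [e, Nat.add_mod_right, Nat.mod_eq_of_lt (by omega)]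

lemma val_shift_add_one (p d : ZMod (n+1)) :
    (d + 1 - p).val = if (d - p).val = n then 0 else (d - p).val + 1 := by
  have e : d + 1 - p = (d - p) + 1 := by ring
  rw [e, val_add_one]

lemma val_shift_sub_one (p d : ZMod (n+1)) :
    (d - 1 - p).val = if (d - p).val = 0 then n else (d - p).val - 1 := by
  have e : d - 1 - p = (d - p) - 1 := by ring
  rw [e, val_sub_one]

lemma shift_cast (p : ZMod (n+1)) (t : ℕ) (ht : t < n+1) :
    ((p + (t : ZMod (n+1))) - p).val = t := by
  have e : p + (t : ZMod (n+1)) - p = (t : ZMod (n+1)) := by ring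
  rw [e, ZMod.val_cast_of_lt ht]

lemma eq_shift (p d : ZMod (n+1)) : d = p + (((d - p).val : ℕ) : ZMod (n+1)) := by
  rw [cast_val_eq]; ring

lemma sub_inj {x y w : ZMod (n+1)} (h : (x - w).val = (y - w).val) : x = y := by
  have := congrArg (fun t : ℕ => (t : ZMod (n+1))) h
  simp only [cast_val_eq] at this
  linear_combination this

lemma shift_eq_iff (p d : ZMod (n+1)) {t : ℕ} (ht : t < n+1) :
    d = p + (t : ZMod (n+1)) ↔ (d - p).val = t := by
  constructor
  · intro h; rw [h]; exact shift_cast p t ht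
  · intro h
    have h2 := cast_val_eq (d - p)
    rw [h] at h2
    linear_combination -h2

lemma ne_add_one (hn : 2 ≤ n) (d : ZMod (n+1)) : d ≠ d + 1 := by
  intro h
  have h1 : ((0:ℕ) : ZMod (n+1)) = ((1:ℕ) : ZMod (n+1)) := by push_cast; linear_combination h
  have := castinj (by omega) (by omega) h1
  omega

lemma ne_sub_one (hn : 2 ≤ n) (d : ZMod (n+1)) : d ≠ d - 1 := by
  intro h
  have h1 : ((1:ℕ) : ZMod (n+1)) = ((0:ℕ) : ZMod (n+1)) := by push_cast; linear_combination h
  have := castinj (by omega) (by omega) h1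
  omega

lemma add_one_ne_sub_one (hn : 2 ≤ n) (d : ZMod (n+1)) : d + 1 ≠ d - 1 := by
  intro h
  have h1 : ((2:ℕ) : ZMod (n+1)) = ((0:ℕ) : ZMod (n+1)) := by push_cast; linear_combination h
  have := castinj (by omega) (by omega) h1
  omega

lemma mulVec_apply (hn : 2 ≤ n) (x : ZMod (n+1) → ℤ) (d : ZMod (n+1)) :
    (cartanA n).mulVec x d = 2 * x d - x (d+1) - x (d-1) := by
  have hd1 : d ≠ d + 1 := ne_add_one hn d
  have hd2 : d ≠ d - 1 := ne_sub_one hn d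
  have hd3 : d + 1 ≠ d - 1 := add_one_ne_sub_one hn d
  have key : ∀ c, (cartanA n) d c * x c =
      (if c = d then 2 * x c else 0) + ((if c = d + 1 then -x c else 0) + (if c = d - 1 then -x c else 0)) := by
    intro c
    simp only [cartanA, Matrix.of_apply]
    split_ifs <;> (first | ring1 | (exfalso; subst_vars; tauto))
  simp only [Matrix.mulVec, dotProduct]
  rw [Finset.sum_congr rfl (fun c _ => key c)]
  rw [Finset.sum_add_distrib, Finset.sum_add_distrib]
  rw [Finset.sum_ite_eq' Finset.univ d (fun c => 2 * x c),
      Finset.sum_ite_eq' Finset.univ (d+1) (fun c => -x c),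
      Finset.sum_ite_eq' Finset.univ (d-1) (fun c => -x c)]
  simp; ring

lemma vA_sub (hn : 2 ≤ n) (m : ℤ) (x w : ZMod (n+1) → ℤ) (d : ZMod (n+1)) :
    vA n m (x - w) d = vA n m x d - (2 * w d - w (d+1) - w (d-1)) := by
  simp only [vA, mulVec_apply hn, Pi.sub_apply]; ring

lemma cycle_adj {a b : ZMod (n+1)} :
    (cycleG n).Adj a b ↔ a ≠ b ∧ (b = a + 1 ∨ a = b + 1) := by
  simp [cycleG, SimpleGraph.fromRel_adj]

lemma adj_succ {K : Set (ZMod (n+1))} {w : ZMod (n+1)} (hw : w ∉ K)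
    {a b : ZMod (n+1)} (hb : b ∈ K) (hab : b = a + 1) :
    (b - w).val = (a - w).val + 1 := by
  have h1 : b - w = (a - w) + 1 := by rw [hab]; ring
  rw [h1, val_add_one]
  split_ifs with h2
  · exfalso
    have h3 : a - w = ((n:ℕ) : ZMod (n+1)) :=
      (cast_val_eq (a - w)).symm.trans (congrArg (fun t : ℕ => (t : ZMod (n+1))) h2)
    have hw' : b = w := by
      have hn0 : ((n:ℕ) : ZMod (n+1)) + 1 = 0 := by
        have := ZMod.natCast_self (n+1); push_cast at this; linear_combination this
      rw [hab]
      linear_combination h3 + hn0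
    exact hw (hw' ▸ hb)
  · rfl

lemma adj_inv {w : ZMod (n+1)} {K : Set (ZMod (n+1))} (hw : w ∉ K)
    {c : ZMod (n+1)} (hc : c ∉ K) {a b : ZMod (n+1)} (ha : a ∈ K) (hb : b ∈ K)
    (hadj : (cycleG n).Adj a b) :
    ((a - w).val < (c - w).val ↔ (b - w).val < (c - w).val) := by
  obtain ⟨hne, hor⟩ := cycle_adj.mp hadj
  have hac : (a - w).val ≠ (c - w).val := fun h => hc (sub_inj h ▸ ha)
  have hbc : (b - w).val ≠ (c - w).val := fun h => hc (sub_inj h ▸ hb)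
  rcases hor with h | h
  · have := adj_succ hw hb h; omega
  · have := adj_succ hw ha h; omega

lemma reach_inv {w : ZMod (n+1)} {K : Set (ZMod (n+1))} (hw : w ∉ K)
    {c : ZMod (n+1)} (hc : c ∉ K) {a b : ZMod (n+1)} (ha : a ∈ K) (hb : b ∈ K)
    (hr : ((cycleG n).induce K).Reachable ⟨a, ha⟩ ⟨b, hb⟩) :
    ((a - w).val < (c - w).val ↔ (b - w).val < (c - w).val) := by
  obtain ⟨wk⟩ := hr
  have key : ∀ (u v : K) (_ : ((cycleG n).induce K).Walk u v),
      (((u : ZMod (n+1)) - w).val < (c - w).val ↔ ((v : ZMod (n+1)) - w).val < (c - w).val) := by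
    intro u v wk
    induction wk with
    | nil => exact Iff.rfl
    | cons h q ih =>
      exact (adj_inv hw hc (by exact Subtype.prop _) (by exact Subtype.prop _) h).trans ih
  exact key ⟨a, ha⟩ ⟨b, hb⟩ wk

lemma arc_interval {K : Set (ZMod (n+1))} (hK : IsArc n K) :
    ∃ (p : ZMod (n+1)) (k : ℕ), 0 < k ∧ k ≤ n ∧ K = {x | (x - p).val < k} := by
  obtain ⟨hne, hproper, hconn⟩ := hK
  obtain ⟨w, hw⟩ : ∃ w, w ∉ K := by
    by_contra h; push_neg at h
    exact hproper (Set.eq_univ_of_forall h)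
  have hKfin : K.Finite := Set.toFinite K
  obtain ⟨a0, ha0K, ha0⟩ := Set.exists_min_image K (fun x => (x - w).val) hKfin hne
  obtain ⟨a1, ha1K, ha1⟩ := Set.exists_max_image K (fun x => (x - w).val) hKfin hne
  have hga0 : 0 < (a0 - w).val := by
    rcases Nat.eq_zero_or_pos ((a0 - w).val) with h | h
    · exfalso
      have h4 := cast_val_eq (a0 - w)
      rw [h] at h4
      have : a0 = w := by push_cast at h4; linear_combination -h4
      exact hw (this ▸ ha0K)
    · exact h
  have hga1 : (a1 - w).val ≤ n := val_le _
  have hle : (a0 - w).val ≤ (a1 - w).val := ha0 a1 ha1K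
  refine ⟨w + (((a0 - w).val : ℕ) : ZMod (n+1)), (a1 - w).val - (a0 - w).val + 1, by omega,
    by omega, ?_⟩
  ext x
  simp only [Set.mem_setOf_eq]
  have hval : (x - (w + (((a0 - w).val : ℕ) : ZMod (n+1)))).val
      = ((x - w).val + (n+1) - (a0 - w).val) % (n+1) := by
    have h2 : ((x - w).val + (n+1) - (a0 - w).val) + (a0 - w).val = (x-w).val + (n+1) := by omega
    have h3 := congrArg (fun t : ℕ => (t : ZMod (n+1))) h2
    push_cast at h3
    have hzz : ((n : ZMod (n+1)) + 1) = 0 := by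
      have := ZMod.natCast_self (n+1); push_cast at this; exact this
    have key : x - (w + (((a0 - w).val:ℕ) : ZMod (n+1)))
        = (((x - w).val + (n+1) - (a0 - w).val : ℕ) : ZMod (n+1)) := by
      have c1 := cast_val_eq (x - w)
      linear_combination -h3 - c1 - hzz
    rw [key, ZMod.val_natCast]
  have hxle := val_le (x - w)
  constructor
  · intro hx
    have h1 := ha0 x hx
    have h2 := ha1 x hx
    rw [hval]
    have e : (x - w).val + (n+1) - (a0 - w).val = ((x-w).val - (a0 - w).val) + (n+1) := by omega
    rw [e, Nat.add_mod_right, Nat.mod_eq_of_lt (by omega)]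
    omega
  · intro hx
    by_contra hxK
    rw [hval] at hx
    rcases Nat.lt_or_ge ((x - w).val) ((a0 - w).val) with h | h
    · rw [Nat.mod_eq_of_lt (by omega)] at hx
      omega
    · have e : (x - w).val + (n+1) - (a0 - w).val = ((x-w).val - (a0 - w).val) + (n+1) := by omega
      rw [e, Nat.add_mod_right, Nat.mod_eq_of_lt (by omega)] at hx
      have hreach := hconn.preconnected ⟨a0, ha0K⟩ ⟨a1, ha1K⟩
      have hiff := reach_inv hw hxK ha0K ha1K hreach
      have hax : (a0 - w).val ≠ (x - w).val := fun hh => hxK (sub_inj hh ▸ ha0K)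
      have hax1 : (a1 - w).val ≠ (x - w).val := fun hh => hxK (sub_inj hh ▸ ha1K)
      have h5 : (a0 - w).val < (x - w).val := by omega
      have := hiff.mp h5
      omega

lemma ncard7 {α : Type*} {a b c d e f g : α}
    (h1 : a ≠ b) (h2 : a ≠ c) (h3 : a ≠ d) (h4 : a ≠ e) (h5 : a ≠ f) (h6 : a ≠ g)
    (h7 : b ≠ c) (h8 : b ≠ d) (h9 : b ≠ e) (h10 : b ≠ f) (h11 : b ≠ g)
    (h12 : c ≠ d) (h13 : c ≠ e) (h14 : c ≠ f) (h15 : c ≠ g)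
    (h16 : d ≠ e) (h17 : d ≠ f) (h18 : d ≠ g)
    (h19 : e ≠ f) (h20 : e ≠ g) (h21 : f ≠ g) :
    ({a,b,c,d,e,f,g} : Set α).ncard = 7 := by
  rw [Set.ncard_insert_of_notMem (by simp [h1,h2,h3,h4,h5,h6]) (Set.toFinite _),
      Set.ncard_insert_of_notMem (by simp [h7,h8,h9,h10,h11]) (Set.toFinite _),
      Set.ncard_insert_of_notMem (by simp [h12,h13,h14,h15]) (Set.toFinite _),
      Set.ncard_insert_of_notMem (by simp [h16,h17,h18]) (Set.toFinite _),
      Set.ncard_insert_of_notMem (by simp [h19,h20]) (Set.toFinite _),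
      Set.ncard_insert_of_notMem (by simp [h21]) (Set.toFinite _),
      Set.ncard_singleton]

end Helpers

section Key
variable {n : ℕ}

set_option maxHeartbeats 2000000 in
theorem key_lemma (hn : 2 ≤ n) (m : ℤ)
    (y : ZMod (n + 1) → ℤ) (hy : DomA n m y)
    (p : ZMod (n+1)) (k k' : ℕ) (hk : 2 ≤ k) (hk' : 2 ≤ k') (hkk : k + k' ≤ n)
    (K K' : Set (ZMod (n + 1)))
    (hKdef : K = {x | (x - p).val < k})
    (hK'def : K' = {x | k ≤ (x - p).val ∧ (x - p).val < k + k'})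
    (i j : ZMod (n + 1))
    (hi : i = p + ((k-1 : ℕ) : ZMod (n+1))) (hj : j = p + ((k : ℕ) : ZMod (n+1)))
    (hcovK : CoversA n m (y - chi n K) y) (hcovK' : CoversA n m (y - chi n K') y) :
    {z | DomA n m z ∧ y - chi n K - chi n K' ≤ z ∧ z ≤ y} =
      {y, y - chi n K, y - chi n K', y - eA n i - eA n j,
        y - chi n K - eA n j, y - chi n K' - eA n i, y - chi n K - chi n K'} ∧
    {z | DomA n m z ∧ y - chi n K - chi n K' ≤ z ∧ z ≤ y}.ncard = 7 := by
  -- pointwise descriptions of the indicator vectors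
  have hχK : ∀ d, chi n K d = if (d - p).val < k then 1 else 0 := by
    intro d
    by_cases h : (d - p).val < k
    · rw [if_pos h]
      have hm : d ∈ K := by rw [hKdef]; exact h
      simp [chi, Set.indicator_of_mem hm]
    · rw [if_neg h]
      have hm : d ∉ K := by rw [hKdef]; exact h
      simp [chi, Set.indicator_of_notMem hm]
  have hχK' : ∀ d, chi n K' d = if k ≤ (d - p).val ∧ (d - p).val < k + k' then 1 else 0 := by
    intro d
    by_cases h : k ≤ (d - p).val ∧ (d - p).val < k + k'
    · rw [if_pos h]
      have hm : d ∈ K' := by rw [hK'def]; exact h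
      simp [chi, Set.indicator_of_mem hm]
    · rw [if_neg h]
      have hm : d ∉ K' := by rw [hK'def]; exact h
      simp [chi, Set.indicator_of_notMem hm]
  have heI : ∀ d, eA n i d = if (d - p).val = k - 1 then 1 else 0 := by
    intro d
    simp only [eA, hi]
    by_cases h : (d - p).val = k - 1
    · rw [if_pos ((shift_eq_iff p d (t := k-1) (by omega)).mpr h), if_pos h]
    · rw [if_neg (fun hh => h ((shift_eq_iff p d (t := k-1) (by omega)).mp hh)), if_neg h]
  have heJ : ∀ d, eA n j d = if (d - p).val = k then 1 else 0 := by
    intro d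
    simp only [eA, hj]
    by_cases h : (d - p).val = k
    · rw [if_pos ((shift_eq_iff p d (t := k) (by omega)).mpr h), if_pos h]
    · rw [if_neg (fun hh => h ((shift_eq_iff p d (t := k) (by omega)).mp hh)), if_neg h]
  -- Step 1: values of vA y on the union
  have Fends : ∀ d, ((d-p).val = 0 ∨ (d-p).val = k-1 ∨ (d-p).val = k ∨ (d-p).val = k+k'-1) →
      1 ≤ vA n m y d := by
    intro d hd
    have h1 := val_shift_add_one p d
    have h2 := val_shift_sub_one p d
    have h3 := val_le (d - p)
    rcases hd with h | h | h | h
    · have hdom := hcovK.1 d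
      rw [vA_sub hn, hχK d, hχK (d+1), hχK (d-1), h1, h2] at hdom
      split_ifs at hdom <;> omega
    · have hdom := hcovK.1 d
      rw [vA_sub hn, hχK d, hχK (d+1), hχK (d-1), h1, h2] at hdom
      split_ifs at hdom <;> omega
    · have hdom := hcovK'.1 d
      rw [vA_sub hn, hχK' d, hχK' (d+1), hχK' (d-1), h1, h2] at hdom
      split_ifs at hdom <;> omega
    · have hdom := hcovK'.1 d
      rw [vA_sub hn, hχK' d, hχK' (d+1), hχK' (d-1), h1, h2] at hdom
      split_ifs at hdom <;> omega
  -- helper for strict inequalities on Pi types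
  have hlt : ∀ u u' : ZMod (n+1) → ℤ, u ≤ u' → u ≠ u' → u < u' :=
    fun u u' h h' => lt_of_le_of_ne h h'
  have hnecoord : ∀ (u u' : ZMod (n+1) → ℤ) (c : ZMod (n+1)), u c ≠ u' c → u ≠ u' :=
    fun u u' c h he => h (he ▸ rfl)
  -- Step 2: upper bound on vA y on the union (using covers with singletons)
  have Fub : ∀ d, (d-p).val < k + k' → vA n m y d ≤ 1 := by
    intro d hd
    by_contra hcon
    push_neg at hcon
    have hdome : DomA n m (y - eA n d) := by
      intro c
      rw [vA_sub hn]
      by_cases hc : c = d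
      · subst hc
        simp only [eA, if_pos rfl, if_neg (Ne.symm (ne_add_one hn c)),
          if_neg (Ne.symm (ne_sub_one hn c))]
        omega
      · have h0 := hy c
        simp only [eA, if_neg hc]
        split_ifs <;> omega
    rcases Nat.lt_or_ge ((d - p).val) k with hdk | hdk
    · -- use cover of K
      set t₀ : ℕ := if (d - p).val = 0 then 1 else 0 with ht₀
      have ht₀n : t₀ < n + 1 := by rw [ht₀]; split_ifs <;> omega
      have ht₀k : t₀ < k := by rw [ht₀]; split_ifs <;> omega
      have ht₀v : t₀ ≠ (d - p).val := by rw [ht₀]; split_ifs <;> omega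
      set c₀ := p + ((t₀ : ℕ) : ZMod (n+1)) with hc₀
      have hc₀v : (c₀ - p).val = t₀ := shift_cast p t₀ ht₀n
      have hc₀d : c₀ ≠ d := fun h => ht₀v (by rw [← hc₀v, h])
      apply hcovK.2.2.2
      refine ⟨y - eA n d, hdome, hlt _ _ ?_ ?_, hlt _ _ ?_ ?_⟩
      · intro c
        simp only [Pi.sub_apply, hχK]
        by_cases hc : c = d
        · subst hc
          have he : eA n c c = (1:ℤ) := by simp [eA]
          rw [he, if_pos hdk]
        · simp only [eA, if_neg hc]; split_ifs <;> omega
      · apply hnecoord _ _ c₀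
        simp only [Pi.sub_apply, hχK, eA]
        rw [hc₀v, if_pos ht₀k, if_neg hc₀d]
        omega
      · intro c
        simp only [Pi.sub_apply, eA]
        split_ifs <;> omega
      · apply hnecoord _ _ d
        have he : eA n d d = (1:ℤ) := by simp [eA]
        rw [Pi.sub_apply, he]
        omega
    · -- use cover of K'
      set t₀ : ℕ := if (d - p).val = k then k+1 else k with ht₀
      have ht₀n : t₀ < n + 1 := by rw [ht₀]; split_ifs <;> omega
      have ht₀k : k ≤ t₀ ∧ t₀ < k + k' := by rw [ht₀]; split_ifs <;> omega
      have ht₀v : t₀ ≠ (d - p).val := by rw [ht₀]; split_ifs <;> omega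
      set c₀ := p + ((t₀ : ℕ) : ZMod (n+1)) with hc₀
      have hc₀v : (c₀ - p).val = t₀ := shift_cast p t₀ ht₀n
      have hc₀d : c₀ ≠ d := fun h => ht₀v (by rw [← hc₀v, h])
      apply hcovK'.2.2.2
      refine ⟨y - eA n d, hdome, hlt _ _ ?_ ?_, hlt _ _ ?_ ?_⟩
      · intro c
        simp only [Pi.sub_apply, hχK']
        by_cases hc : c = d
        · subst hc
          have he : eA n c c = (1:ℤ) := by simp [eA]
          rw [he, if_pos (And.intro hdk hd)]
        · simp only [eA, if_neg hc]; split_ifs <;> omega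
      · apply hnecoord _ _ c₀
        simp only [Pi.sub_apply, hχK', eA]
        rw [hc₀v, if_pos ht₀k, if_neg hc₀d]
        omega
      · intro c
        simp only [Pi.sub_apply, eA]
        split_ifs <;> omega
      · apply hnecoord _ _ d
        have he : eA n d d = (1:ℤ) := by simp [eA]
        rw [Pi.sub_apply, he]
        omega
  -- Step 3: vanishing of vA y at interior points (using covers with segments)
  have Fint : ∀ d, ((0 < (d-p).val ∧ (d-p).val < k-1) ∨ (k < (d-p).val ∧ (d-p).val < k+k'-1)) →
      vA n m y d = 0 := by
    intro d hd
    have hvd := val_le (d - p)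
    rcases hd with ⟨hd1, hd2⟩ | ⟨hd1, hd2⟩
    · -- K side
      set u : ZMod (n+1) → ℤ := fun c => if (c - p).val ≤ (d - p).val then 1 else 0 with hu
      have hndom : ¬ DomA n m (y - u) := by
        intro hdu
        apply hcovK.2.2.2
        have hPk1 : ((p + (((k-1:ℕ)) : ZMod (n+1))) - p).val = k - 1 := shift_cast p (k-1) (by omega)
        have hP0 : ((p + (((0:ℕ)) : ZMod (n+1))) - p).val = 0 := shift_cast p 0 (by omega)
        refine ⟨y - u, hdu, hlt _ _ ?_ ?_, hlt _ _ ?_ ?_⟩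
        · intro c
          simp only [Pi.sub_apply, hχK, hu]
          split_ifs <;> omega
        · apply hnecoord _ _ (p + (((k-1:ℕ)) : ZMod (n+1)))
          simp only [Pi.sub_apply, hχK, hu, hPk1]
          rw [if_pos (by omega), if_neg (by omega)]
          omega
        · intro c
          simp only [Pi.sub_apply, hu]
          split_ifs <;> omega
        · apply hnecoord _ _ (p + (((0:ℕ)) : ZMod (n+1)))
          simp only [Pi.sub_apply, hu, hP0]
          rw [if_pos (by omega)]
          omega
      simp only [DomA, not_forall, not_le] at hndom
      obtain ⟨c, hc⟩ := hndom
      rw [vA_sub hn] at hc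
      simp only [hu] at hc
      rw [val_shift_add_one p c, val_shift_sub_one p c] at hc
      have hvc := val_le (c - p)
      have hFc := Fends c
      have hF0c := hy c
      have hceq : c = d := by
        by_contra hcd
        have hne : (c-p).val ≠ (d-p).val := fun h => hcd (sub_inj h)
        split_ifs at hc <;> omega
      subst hceq
      split_ifs at hc <;> omega
    · -- K' side
      set u : ZMod (n+1) → ℤ := fun c => if k ≤ (c - p).val ∧ (c - p).val ≤ (d - p).val then 1 else 0 with hu
      have hndom : ¬ DomA n m (y - u) := by
        intro hdu
        apply hcovK'.2.2.2
        have hPq : ((p + (((k+k'-1:ℕ)) : ZMod (n+1))) - p).val = k+k'-1 := shift_cast p (k+k'-1) (by omega)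
        have hPk : ((p + (((k:ℕ)) : ZMod (n+1))) - p).val = k := shift_cast p k (by omega)
        refine ⟨y - u, hdu, hlt _ _ ?_ ?_, hlt _ _ ?_ ?_⟩
        · intro c
          simp only [Pi.sub_apply, hχK', hu]
          split_ifs <;> omega
        · apply hnecoord _ _ (p + (((k+k'-1:ℕ)) : ZMod (n+1)))
          simp only [Pi.sub_apply, hχK', hu, hPq]
          rw [if_pos (by omega), if_neg (by omega)]
          omega
        · intro c
          simp only [Pi.sub_apply, hu]
          split_ifs <;> omega
        · apply hnecoord _ _ (p + (((k:ℕ)) : ZMod (n+1)))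
          simp only [Pi.sub_apply, hu, hPk]
          rw [if_pos (by omega)]
          omega
      simp only [DomA, not_forall, not_le] at hndom
      obtain ⟨c, hc⟩ := hndom
      rw [vA_sub hn] at hc
      simp only [hu] at hc
      rw [val_shift_add_one p c, val_shift_sub_one p c] at hc
      have hvc := val_le (c - p)
      have hFc := Fends c
      have hF0c := hy c
      have hceq : c = d := by
        by_contra hcd
        have hne : (c-p).val ≠ (d-p).val := fun h => hcd (sub_inj h)
        split_ifs at hc <;> omega
      subst hceq
      split_ifs at hc <;> omega
  -- Step 4: dominance of the seven candidates
  have DomSub : ∀ u : ZMod (n+1) → ℤ,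
      (∀ d, 2 * u d - u (d+1) - u (d-1) ≤ vA n m y d) → DomA n m (y - u) := by
    intro u hu d
    rw [vA_sub hn]
    have := hu d
    omega
  have dom4 : DomA n m (y - eA n i - eA n j) := by
    rw [sub_sub]
    apply DomSub
    intro d
    have h1 := val_shift_add_one p d
    have h2 := val_shift_sub_one p d
    have h3 := val_le (d - p)
    have hFe := Fends d
    have hF0 := hy d
    simp only [Pi.add_apply, heI, heJ]
    rw [h1, h2]
    split_ifs <;> omega
  have dom5 : DomA n m (y - chi n K - eA n j) := by
    rw [sub_sub]
    apply DomSub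
    intro d
    have h1 := val_shift_add_one p d
    have h2 := val_shift_sub_one p d
    have h3 := val_le (d - p)
    have hFe := Fends d
    have hF0 := hy d
    simp only [Pi.add_apply, hχK, heJ]
    rw [h1, h2]
    split_ifs <;> omega
  have dom6 : DomA n m (y - chi n K' - eA n i) := by
    rw [sub_sub]
    apply DomSub
    intro d
    have h1 := val_shift_add_one p d
    have h2 := val_shift_sub_one p d
    have h3 := val_le (d - p)
    have hFe := Fends d
    have hF0 := hy d
    simp only [Pi.add_apply, hχK', heI]
    rw [h1, h2]
    split_ifs <;> omega
  have dom7 : DomA n m (y - chi n K - chi n K') := by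
    rw [sub_sub]
    apply DomSub
    intro d
    have h1 := val_shift_add_one p d
    have h2 := val_shift_sub_one p d
    have h3 := val_le (d - p)
    have hFe := Fends d
    have hF0 := hy d
    simp only [Pi.add_apply, hχK, hχK']
    rw [h1, h2]
    split_ifs <;> omega
  -- bounds for the seven candidates
  have bnd : ∀ (a1 a2 : ZMod (n+1) → ℤ),
      (∀ d, 0 ≤ a1 d ∧ 0 ≤ a2 d ∧ a1 d + a2 d ≤ chi n K d + chi n K' d) →
      (y - chi n K - chi n K' ≤ y - a1 - a2 ∧ y - a1 - a2 ≤ y) := by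
    intro a1 a2 h
    constructor
    · intro d
      have := h d
      simp only [Pi.sub_apply]
      omega
    · intro d
      have := h d
      simp only [Pi.sub_apply]
      omega
  have memRHS : ∀ z ∈ ({y, y - chi n K, y - chi n K', y - eA n i - eA n j,
        y - chi n K - eA n j, y - chi n K' - eA n i, y - chi n K - chi n K'} : Set (ZMod (n+1) → ℤ)),
      DomA n m z ∧ y - chi n K - chi n K' ≤ z ∧ z ≤ y := by
    intro z hz
    have hz0 : ∀ u u' : ZMod (n+1) → ℤ, y - u - u' = y - u - u' := fun _ _ => rfl
    simp only [Set.mem_insert_iff, Set.mem_singleton_iff] at hz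
    have hsub0 : ∀ u : ZMod (n+1) → ℤ, y - u = y - u - 0 := by intro u; funext d; simp
    have hy0 : y = y - 0 - 0 := by funext d; simp
    rcases hz with h|h|h|h|h|h|h <;> subst h
    · refine ⟨hy, ?_, le_refl _⟩
      have := bnd 0 0 (by intro d; simp only [Pi.zero_apply, hχK, hχK']; split_ifs <;> omega)
      rw [← hy0] at this
      exact this.1
    · refine ⟨hcovK.1, ?_, ?_⟩
      · have := bnd (chi n K) 0 (by
          intro d; simp only [Pi.zero_apply, hχK, hχK']; split_ifs <;> omega)
        rw [← hsub0] at this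
        exact this.1
      · have := bnd (chi n K) 0 (by
          intro d; simp only [Pi.zero_apply, hχK, hχK']; split_ifs <;> omega)
        rw [← hsub0] at this
        exact this.2
    · refine ⟨hcovK'.1, ?_, ?_⟩
      · have := bnd (chi n K') 0 (by
          intro d; simp only [Pi.zero_apply, hχK, hχK']; split_ifs <;> omega)
        rw [← hsub0] at this
        exact this.1
      · have := bnd (chi n K') 0 (by
          intro d; simp only [Pi.zero_apply, hχK, hχK']; split_ifs <;> omega)
        rw [← hsub0] at this
        exact this.2
    · have := bnd (eA n i) (eA n j) (by
        intro d; simp only [hχK, hχK', heI, heJ]; split_ifs <;> omega)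
      exact ⟨dom4, this.1, this.2⟩
    · have := bnd (chi n K) (eA n j) (by
        intro d; simp only [hχK, hχK', heJ]; split_ifs <;> omega)
      exact ⟨dom5, this.1, this.2⟩
    · have := bnd (chi n K') (eA n i) (by
        intro d; simp only [hχK, hχK', heI]; split_ifs <;> omega)
      exact ⟨dom6, this.1, this.2⟩
    · have := bnd (chi n K) (chi n K') (by
        intro d; simp only [hχK, hχK']; split_ifs <;> omega)
      exact ⟨dom7, this.1, this.2⟩
  -- Step 5: classification of dominant elements of the interval
  have classify : ∀ z, DomA n m z → y - chi n K - chi n K' ≤ z → z ≤ y →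
      z ∈ ({y, y - chi n K, y - chi n K', y - eA n i - eA n j,
        y - chi n K - eA n j, y - chi n K' - eA n i, y - chi n K - chi n K'} : Set (ZMod (n+1) → ℤ)) := by
    intro z hdz hz1 hz2
    set b : ℕ → ℤ := fun t => y (p + (t : ZMod (n+1))) - z (p + (t : ZMod (n+1))) with hbdef
    have hbeq : ∀ t : ℕ, b t = y (p + (t : ZMod (n+1))) - z (p + (t : ZMod (n+1))) := fun _ => rfl
    have hwb : ∀ d, y d - z d = b ((d - p).val) := by
      intro d
      have e := eq_shift p d
      calc y d - z d
          = y (p + (((d-p).val : ℕ) : ZMod (n+1))) - z (p + (((d-p).val : ℕ) : ZMod (n+1))) := by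
            rw [← e]
        _ = b ((d-p).val) := (hbeq _).symm
    have hb01 : ∀ t : ℕ, t ≤ n → 0 ≤ b t ∧
        b t ≤ (if t < k then 1 else 0) + (if k ≤ t ∧ t < k + k' then 1 else 0) := by
      intro t ht
      have h1 : (y - chi n K - chi n K') (p + (t : ZMod (n+1))) ≤ z (p + (t : ZMod (n+1))) := hz1 _
      have h2 : z (p + (t : ZMod (n+1))) ≤ y (p + (t : ZMod (n+1))) := hz2 _
      simp only [Pi.sub_apply, hχK, hχK'] at h1
      rw [shift_cast p t (by omega)] at h1
      have hb := hbeq t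
      constructor
      · omega
      · split_ifs at h1 ⊢ <;> omega
    have hb2 : ∀ t : ℕ, t ≤ n → b t = 0 ∨ b t = 1 := by
      intro t ht
      have := hb01 t ht
      split_ifs at this <;> omega
    have hbn : b n = 0 := by
      have := hb01 n (le_refl n)
      rw [if_neg (by omega), if_neg (by omega)] at this
      omega
    -- dominance inequalities in terms of b
    have hvz : ∀ d, 0 ≤ vA n m y d -
        (2 * (y d - z d) - (y (d+1) - z (d+1)) - (y (d-1) - z (d-1))) := by
      intro d
      have h := vA_sub hn m y (y - z) d
      rw [sub_sub_cancel] at h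
      have h2 := hdz d
      simp only [Pi.sub_apply] at h
      omega
    have hDom' : ∀ d, 0 ≤ vA n m y d
        - 2 * b ((d-p).val) + b ((d + 1 - p).val) + b ((d - 1 - p).val) := by
      intro d
      have h := hvz d
      rw [hwb d, hwb (d+1), hwb (d-1)] at h
      omega
    have hW0 : 0 ≤ vA n m y (p + ((0:ℕ) : ZMod (n+1))) - 2 * b 0 + b 1 := by
      have h := hDom' (p + ((0:ℕ) : ZMod (n+1)))
      rw [val_shift_add_one, val_shift_sub_one, shift_cast p 0 (by omega)] at h
      rw [if_neg (by omega), if_pos rfl, hbn] at h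
      simp only [Nat.zero_add] at h
      omega
    have hWS : ∀ t : ℕ, 1 ≤ t → t < k + k' →
        0 ≤ vA n m y (p + (t : ZMod (n+1))) - 2 * b t + b (t+1) + b (t-1) := by
      intro t h1t htk
      have h := hDom' (p + (t : ZMod (n+1)))
      rw [val_shift_add_one, val_shift_sub_one, shift_cast p t (by omega)] at h
      rw [if_neg (by omega), if_neg (by omega)] at h
      exact h
    -- vA y facts in terms of indices
    have hWends : ∀ t : ℕ, (t = 0 ∨ t = k-1 ∨ t = k ∨ t = k+k'-1) →
        1 ≤ vA n m y (p + (t : ZMod (n+1))) := by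
      intro t ht
      apply Fends
      rw [shift_cast p t (by omega)]
      exact ht
    have hWub : ∀ t : ℕ, t < k + k' → vA n m y (p + (t : ZMod (n+1))) ≤ 1 := by
      intro t ht
      apply Fub
      rw [shift_cast p t (by omega)]
      exact ht
    have hWint : ∀ t : ℕ, ((0 < t ∧ t < k-1) ∨ (k < t ∧ t < k+k'-1)) →
        vA n m y (p + (t : ZMod (n+1))) = 0 := by
      intro t ht
      apply Fint
      rw [shift_cast p t (by omega)]
      exact ht
    -- the four induction claims
    have CA : b 0 = 1 → ∀ t, t < k → b t = 1 := by
      intro h0 t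
      induction t with
      | zero => intro _; exact h0
      | succ s ih =>
        intro hlt
        have hbs : b s = 1 := ih (by omega)
        by_contra hne
        have hbs1 : b (s+1) = 0 := by
          have := hb2 (s+1) (by omega)
          tauto
        rcases Nat.eq_zero_or_pos s with hs | hs
        · subst hs
          have h1 := hWub 0 (by omega)
          have h2 := hW0
          simp only [Nat.zero_add] at hbs1
          omega
        · have h1 := hWS s (by omega) (by omega)
          have h2 := hWint s (by omega)
          have h3 := (hb2 (s-1) (by omega))
          have e : s - 1 + 1 = s := by omega
          omega
    have CB : b 0 = 0 → ∀ t, t < k - 1 → b t = 0 := by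
      intro h0 t
      induction t with
      | zero => intro _; exact h0
      | succ s ih =>
        intro hlt
        have hbs : b s = 0 := ih (by omega)
        by_contra hne
        have hbs1 : b (s+1) = 1 := by
          have := hb2 (s+1) (by omega)
          tauto
        have h1 := hWS (s+1) (by omega) (by omega)
        have h2 := hWint (s+1) (by omega)
        have h3 := hb2 (s+1+1) (by omega)
        rw [show s + 1 - 1 = s by omega] at h1
        omega
    have CC : b (k+k'-1) = 1 → ∀ t, k ≤ t → t < k + k' → b t = 1 := by
      intro hlast
      have P : ∀ s, s < k' → b (k+k'-1-s) = 1 := by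
        intro s
        induction s with
        | zero => intro _; simpa using hlast
        | succ s ih =>
          intro hlt
          have hih : b (k+k'-1-s) = 1 := ih (by omega)
          by_contra hne
          obtain ⟨t, htdef⟩ : ∃ t, k+k'-1-(s+1) = t := ⟨_, rfl⟩
          rw [htdef] at hne
          have hb0' : b t = 0 := by
            have := hb2 t (by omega)
            tauto
          rw [show k+k'-1-s = t+1 by omega] at hih
          have h1 := hWS (t+1) (by omega) (by omega)
          rw [show t+1-1 = t by omega] at h1
          have h2 := hb2 (t+1+1) (by omega)
          rcases Nat.lt_or_ge (t+1) (k+k'-1) with hcase | hcase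
          · have h3 := hWint (t+1) (by omega)
            omega
          · have h3 := hWub (t+1) (by omega)
            have h4 : b (t+1+1) = 0 := by
              rw [show t+1+1 = k+k' by omega]
              have := hb01 (k+k') (by omega)
              rw [if_neg (by omega), if_neg (by omega)] at this
              omega
            omega
      intro t hkt htk
      have := P (k+k'-1-t) (by omega)
      rw [show k+k'-1-(k+k'-1-t) = t by omega] at this
      exact this
    have CD : b (k+k'-1) = 0 → ∀ t, k < t → t < k + k' → b t = 0 := by
      intro hlast
      have P : ∀ s, s < k' - 1 → b (k+k'-1-s) = 0 := by
        intro s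
        induction s with
        | zero => intro _; simpa using hlast
        | succ s ih =>
          intro hlt
          have hih : b (k+k'-1-s) = 0 := ih (by omega)
          by_contra hne
          obtain ⟨t, htdef⟩ : ∃ t, k+k'-1-(s+1) = t := ⟨_, rfl⟩
          rw [htdef] at hne
          have hb1' : b t = 1 := by
            have := hb2 t (by omega)
            tauto
          rw [show k+k'-1-s = t+1 by omega] at hih
          have h1 := hWS t (by omega) (by omega)
          have h2 := hb2 (t-1) (by omega)
          have h3 := hWint t (by omega)
          omega
      intro t hkt htk
      have := P (k+k'-1-t) (by omega)
      rw [show k+k'-1-(k+k'-1-t) = t by omega] at this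
      exact this
    -- master description of b
    have hmaster : ∀ t : ℕ, t ≤ n → b t =
        if t < k-1 then b 0 else if t = k-1 then b (k-1) else if t = k then b k
        else if t < k+k' then b (k+k'-1) else 0 := by
      intro t ht
      split_ifs with c1 c2 c3 c4
      · rcases hb2 0 (by omega) with h0 | h0
        · rw [h0]; exact CB h0 t c1
        · rw [h0]; exact CA h0 t (by omega)
      · rw [c2]
      · rw [c3]
      · rcases hb2 (k+k'-1) (by omega) with h0 | h0
        · rw [h0]; exact CD h0 t (by omega) c4
        · rw [h0]; exact CC h0 t (by omega) c4
      · have := hb01 t ht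
        rw [if_neg (by omega), if_neg (by omega)] at this
        omega
    -- equality extractor
    have hzeq : ∀ u : ZMod (n+1) → ℤ, (∀ d, y d - z d = u d) → z = y - u := by
      intro u hu
      funext d
      have := hu d
      simp only [Pi.sub_apply]
      omega
    simp only [Set.mem_insert_iff, Set.mem_singleton_iff]
    -- case analysis on the four boundary bits
    rcases hb2 0 (by omega) with hβ0 | hβ0 <;>
      rcases hb2 (k-1) (by omega) with hβ1 | hβ1 <;>
      rcases hb2 k (by omega) with hβ2 | hβ2 <;>
      rcases hb2 (k+k'-1) (by omega) with hβ3 | hβ3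
    -- (0,0,0,0) : z = y
    · left
      have : z = y - 0 := hzeq 0 (by
        intro d
        rw [hwb d, hmaster _ (val_le (d-p))]
        have hv := val_le (d - p)
        simp only [Pi.zero_apply]
        split_ifs <;> omega)
      rw [this]; funext d; simp
    -- (0,0,0,1) : contradiction via CC at k
    · exfalso
      have := CC hβ3 k (le_refl k) (by omega)
      omega
    -- (0,0,1,0) : contradiction
    · exfalso
      have h1 := hWS k (by omega) (by omega)
      have h2 := hWub k (by omega)
      have h3 := CD hβ3 (k+1) (by omega) (by omega)
      have h4 := hb2 (k-1) (by omega)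
      omega
    -- (0,0,1,1) : z = y - chi K'
    · right; right; left
      exact hzeq (chi n K') (by
        intro d
        rw [hwb d, hmaster _ (val_le (d-p)), hχK']
        have hv := val_le (d - p)
        split_ifs <;> omega)
    -- (0,1,0,0) : contradiction
    · exfalso
      have h1 := hWS (k-1) (by omega) (by omega)
      have h2 := hWub (k-1) (by omega)
      rw [show k - 1 + 1 = k by omega] at h1
      have h4 := hb2 (k-1-1) (by omega)
      rcases Nat.lt_or_ge k 3 with hk3 | hk3
      · rw [show k - 1 - 1 = 0 by omega] at h1
        omega
      · have h5 := CB hβ0 (k-1-1) (by omega)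
        omega
    -- (0,1,0,1) : contradiction via CC at k
    · exfalso
      have := CC hβ3 k (le_refl k) (by omega)
      omega
    -- (0,1,1,0) : z = y - e i - e j
    · right; right; right; left
      rw [sub_sub]
      exact hzeq (eA n i + eA n j) (by
        intro d
        rw [hwb d, hmaster _ (val_le (d-p))]
        simp only [Pi.add_apply, heI, heJ]
        have hv := val_le (d - p)
        split_ifs <;> omega)
    -- (0,1,1,1) : z = y - chi K' - e i
    · right; right; right; right; right; left
      rw [sub_sub]
      exact hzeq (chi n K' + eA n i) (by
        intro d
        rw [hwb d, hmaster _ (val_le (d-p))]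
        simp only [Pi.add_apply, hχK', heI]
        have hv := val_le (d - p)
        split_ifs <;> omega)
    -- (1,0,*,*) : contradiction via CA at k-1
    · exfalso
      have := CA hβ0 (k-1) (by omega)
      omega
    · exfalso
      have := CA hβ0 (k-1) (by omega)
      omega
    · exfalso
      have := CA hβ0 (k-1) (by omega)
      omega
    · exfalso
      have := CA hβ0 (k-1) (by omega)
      omega
    -- (1,1,0,0) : z = y - chi K
    · right; left
      exact hzeq (chi n K) (by
        intro d
        rw [hwb d, hmaster _ (val_le (d-p)), hχK]
        have hv := val_le (d - p)
        split_ifs <;> omega)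
    -- (1,1,0,1) : contradiction via CC at k
    · exfalso
      have := CC hβ3 k (le_refl k) (by omega)
      omega
    -- (1,1,1,0) : z = y - chi K - e j
    · right; right; right; right; left
      rw [sub_sub]
      exact hzeq (chi n K + eA n j) (by
        intro d
        rw [hwb d, hmaster _ (val_le (d-p))]
        simp only [Pi.add_apply, hχK, heJ]
        have hv := val_le (d - p)
        split_ifs <;> omega)
    -- (1,1,1,1) : z = y - chi K - chi K'
    · right; right; right; right; right; right
      rw [sub_sub]
      exact hzeq (chi n K + chi n K') (by
        intro d
        rw [hwb d, hmaster _ (val_le (d-p))]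
        simp only [Pi.add_apply, hχK, hχK']
        have hv := val_le (d - p)
        split_ifs <;> omega)
  -- assemble the set equality
  have hseteq : {z | DomA n m z ∧ y - chi n K - chi n K' ≤ z ∧ z ≤ y} =
      ({y, y - chi n K, y - chi n K', y - eA n i - eA n j,
        y - chi n K - eA n j, y - chi n K' - eA n i, y - chi n K - chi n K'} : Set (ZMod (n+1) → ℤ)) := by
    ext z
    constructor
    · rintro ⟨h1, h2, h3⟩
      exact classify z h1 h2 h3
    · intro hz
      exact memRHS z hz
  refine ⟨hseteq, ?_⟩
  rw [hseteq]
  -- distinctness of the seven elements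
  have hP : ∀ t : ℕ, t < n + 1 → ((p + (t : ZMod (n+1))) - p).val = t := fun t ht => shift_cast p t ht
  have hdiff : ∀ (u u' : ZMod (n+1) → ℤ) (t : ℕ), t < n + 1 →
      u (p + (t : ZMod (n+1))) ≠ u' (p + (t : ZMod (n+1))) → y - u ≠ y - u' := by
    intro u u' t ht hne he
    apply hne
    have := congrFun he (p + (t : ZMod (n+1)))
    simp only [Pi.sub_apply] at this
    omega
  have hdiff0 : ∀ (u : ZMod (n+1) → ℤ) (t : ℕ), t < n + 1 →
      u (p + (t : ZMod (n+1))) ≠ 0 → y ≠ y - u := by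
    intro u t ht hne he
    apply hne
    have := congrFun he (p + (t : ZMod (n+1)))
    simp only [Pi.sub_apply] at this
    omega
  -- values at the four sentinel points, as rewriting lemmas
  have hssK : ∀ (t : ℕ), t < n+1 → chi n K (p + (t : ZMod (n+1))) = if t < k then 1 else 0 := by
    intro t ht; rw [hχK, hP t ht]
  have hssK' : ∀ (t : ℕ), t < n+1 → chi n K' (p + (t : ZMod (n+1))) = if k ≤ t ∧ t < k + k' then 1 else 0 := by
    intro t ht; rw [hχK', hP t ht]
  have hssI : ∀ (t : ℕ), t < n+1 → eA n i (p + (t : ZMod (n+1))) = if t = k - 1 then 1 else 0 := by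
    intro t ht; rw [heI, hP t ht]
  have hssJ : ∀ (t : ℕ), t < n+1 → eA n j (p + (t : ZMod (n+1))) = if t = k then 1 else 0 := by
    intro t ht; rw [heJ, hP t ht]
  -- rewrite double subtractions as single ones
  have hss : ∀ u u' : ZMod (n+1) → ℤ, y - u - u' = y - (u + u') := fun u u' => sub_sub y u u'
  rw [hss (eA n i) (eA n j), hss (chi n K) (eA n j), hss (chi n K') (eA n i),
      hss (chi n K) (chi n K')]
  have h0n : (0:ℕ) < n + 1 := by omega
  have hk1n : k - 1 < n + 1 := by omega
  have hkn : k < n + 1 := by omega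
  have hqn : k + k' - 1 < n + 1 := by omega
  apply ncard7
  · exact hdiff0 _ 0 h0n (by
      simp only [hssK 0 h0n]; split_ifs <;> omega)
  · exact hdiff0 _ k hkn (by
      simp only [hssK' k hkn]; split_ifs <;> omega)
  · exact hdiff0 _ (k-1) hk1n (by
      simp only [Pi.add_apply, hssI (k-1) hk1n, hssJ (k-1) hk1n]; split_ifs <;> omega)
  · exact hdiff0 _ 0 h0n (by
      simp only [Pi.add_apply, hssK 0 h0n, hssJ 0 h0n]; split_ifs <;> omega)
  · exact hdiff0 _ k hkn (by
      simp only [Pi.add_apply, hssK' k hkn, hssI k hkn]; split_ifs <;> omega)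
  · exact hdiff0 _ 0 h0n (by
      simp only [Pi.add_apply, hssK 0 h0n, hssK' 0 h0n]; split_ifs <;> omega)
  · exact hdiff _ _ 0 h0n (by
      simp only [Pi.add_apply, hssK 0 h0n, hssK' 0 h0n]; split_ifs <;> omega)
  · exact hdiff _ _ 0 h0n (by
      simp only [Pi.add_apply, hssK 0 h0n, hssK' 0 h0n, hssI 0 h0n, hssJ 0 h0n]
      split_ifs <;> omega)
  · exact hdiff _ _ k hkn (by
      simp only [Pi.add_apply, hssK k hkn, hssK' k hkn, hssI k hkn, hssJ k hkn]
      split_ifs <;> omega)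
  · exact hdiff _ _ 0 h0n (by
      simp only [Pi.add_apply, hssK 0 h0n, hssK' 0 h0n, hssI 0 h0n, hssJ 0 h0n]
      split_ifs <;> omega)
  · exact hdiff _ _ k hkn (by
      simp only [Pi.add_apply, hssK k hkn, hssK' k hkn, hssI k hkn, hssJ k hkn]
      split_ifs <;> omega)
  · exact hdiff _ _ (k-1) hk1n (by
      simp only [Pi.add_apply, hssK (k-1) hk1n, hssK' (k-1) hk1n, hssI (k-1) hk1n, hssJ (k-1) hk1n]
      split_ifs <;> omega)
  · exact hdiff _ _ 0 h0n (by
      simp only [Pi.add_apply, hssK 0 h0n, hssK' 0 h0n, hssI 0 h0n, hssJ 0 h0n]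
      split_ifs <;> omega)
  · exact hdiff _ _ (k-1) hk1n (by
      simp only [Pi.add_apply, hssK (k-1) hk1n, hssK' (k-1) hk1n, hssI (k-1) hk1n, hssJ (k-1) hk1n]
      split_ifs <;> omega)
  · exact hdiff _ _ 0 h0n (by
      simp only [Pi.add_apply, hssK 0 h0n, hssK' 0 h0n, hssI 0 h0n, hssJ 0 h0n]
      split_ifs <;> omega)
  · exact hdiff _ _ 0 h0n (by
      simp only [Pi.add_apply, hssK 0 h0n, hssK' 0 h0n, hssI 0 h0n, hssJ 0 h0n]
      split_ifs <;> omega)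
  · exact hdiff _ _ (k+k'-1) hqn (by
      simp only [Pi.add_apply, hssK (k+k'-1) hqn, hssK' (k+k'-1) hqn, hssI (k+k'-1) hqn,
        hssJ (k+k'-1) hqn]
      split_ifs <;> omega)
  · exact hdiff _ _ 0 h0n (by
      simp only [Pi.add_apply, hssK 0 h0n, hssK' 0 h0n, hssI 0 h0n, hssJ 0 h0n]
      split_ifs <;> omega)
  · exact hdiff _ _ 0 h0n (by
      simp only [Pi.add_apply, hssK 0 h0n, hssK' 0 h0n, hssI 0 h0n, hssJ 0 h0n]
      split_ifs <;> omega)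
  · exact hdiff _ _ (k+k'-1) hqn (by
      simp only [Pi.add_apply, hssK (k+k'-1) hqn, hssK' (k+k'-1) hqn, hssI (k+k'-1) hqn,
        hssJ (k+k'-1) hqn]
      split_ifs <;> omega)
  · exact hdiff _ _ 0 h0n (by
      simp only [Pi.add_apply, hssK 0 h0n, hssK' 0 h0n, hssI 0 h0n, hssJ 0 h0n]
      split_ifs <;> omega)

end Key

section Main
variable {n : ℕ}

lemma nontrivial_two {K : Set (ZMod (n+1))} {p : ZMod (n+1)} {k : ℕ}
    (hk0 : 0 < k) (hKdef : K = {x | (x - p).val < k}) (hK2 : K.Nontrivial) : 2 ≤ k := by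
  by_contra h
  have hk1 : k = 1 := by omega
  obtain ⟨a, ha, b, hb, hab⟩ := hK2
  rw [hKdef, Set.mem_setOf_eq] at ha hb
  apply hab
  apply sub_inj (w := p)
  omega

lemma config (hn : 2 ≤ n) {K K' : Set (ZMod (n+1))}
    (hK : IsArc n K) (hK' : IsArc n K') (hK2 : K.Nontrivial) (hK'2 : K'.Nontrivial)
    (hdisj : K ∩ K' = ∅) (hproper : K ∪ K' ≠ Set.univ)
    {i j : ZMod (n+1)} (hiK : i ∈ K) (hjK : j ∈ K') (hadj : j = i + 1) :
    ∃ (p : ZMod (n+1)) (k k' : ℕ), 2 ≤ k ∧ 2 ≤ k' ∧ k + k' ≤ n ∧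
      K = {x | (x - p).val < k} ∧ K' = {x | k ≤ (x - p).val ∧ (x - p).val < k + k'} ∧
      i = p + ((k-1 : ℕ) : ZMod (n+1)) ∧ j = p + ((k : ℕ) : ZMod (n+1)) := by
  obtain ⟨p, k, hk0, hkn, hKdef⟩ := arc_interval hK
  obtain ⟨q, k', hk'0, hk'n, hK'def⟩ := arc_interval hK'
  have hdisj' : ∀ x, x ∈ K → x ∈ K' → False := by
    intro x h1 h2
    rw [Set.eq_empty_iff_forall_notMem] at hdisj
    exact hdisj x ⟨h1, h2⟩
  have hk2 : 2 ≤ k := nontrivial_two hk0 hKdef hK2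
  have hk'2 : 2 ≤ k' := nontrivial_two hk'0 hK'def hK'2
  -- i is the right endpoint of K
  have hiv : (i - p).val < k := by rw [hKdef] at hiK; exact hiK
  have hie : (i - p).val = k - 1 := by
    by_contra h
    apply hdisj' j
    · rw [hKdef, Set.mem_setOf_eq, hadj, val_shift_add_one p i, if_neg (by omega)]
      omega
    · exact hjK
  -- j is the left endpoint of K'
  have hjv : (j - q).val < k' := by rw [hK'def] at hjK; exact hjK
  have hje : (j - q).val = 0 := by
    by_contra h
    apply hdisj' i hiK
    rw [hK'def, Set.mem_setOf_eq]
    have : (i - q).val = (j - q).val - 1 := by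
      have e : i = j - 1 := by rw [hadj]; ring
      rw [e, val_shift_sub_one q j, if_neg h]
    omega
  have hqj : q = j := by
    apply sub_inj (w := q)
    rw [hje]
    simp
  have hip : i = p + ((k-1 : ℕ) : ZMod (n+1)) := by
    rw [shift_eq_iff p i (by omega)]
    exact hie
  have hjp : j = p + ((k : ℕ) : ZMod (n+1)) := by
    rw [hadj, hip]
    have : ((k-1 : ℕ) : ZMod (n+1)) + 1 = ((k : ℕ) : ZMod (n+1)) := by
      have e : (k-1) + 1 = k := by omega
      rw [← e]
      push_cast
      ring
    rw [add_assoc, this]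
  -- k + k' ≤ n
  have hsum : k + k' ≤ n := by
    by_contra h
    push_neg at h
    apply hproper
    apply Set.eq_univ_of_forall
    intro x
    rcases Nat.lt_or_ge ((x - p).val) k with hx | hx
    · left; rw [hKdef]; exact hx
    · right
      rw [hK'def, Set.mem_setOf_eq, hqj, hjp]
      have e : x - (p + ((k : ℕ) : ZMod (n+1))) = (x - p) - ((k : ℕ) : ZMod (n+1)) := by ring
      rw [e, val_sub_nat _ (by omega)]
      have hxv := val_le (x - p)
      rw [show (x-p).val + (n+1) - k = ((x-p).val - k) + (n+1) by omega, Nat.add_mod_right,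
        Nat.mod_eq_of_lt (by omega)]
      omega
  -- description of K' relative to p
  have hK'p : K' = {x | k ≤ (x - p).val ∧ (x - p).val < k + k'} := by
    rw [hK'def, hqj, hjp]
    ext x
    simp only [Set.mem_setOf_eq]
    have e : x - (p + ((k : ℕ) : ZMod (n+1))) = (x - p) - ((k : ℕ) : ZMod (n+1)) := by ring
    rw [e, val_sub_nat _ (by omega)]
    have hxv := val_le (x - p)
    rcases Nat.lt_or_ge ((x - p).val) k with hx | hx
    · rw [Nat.mod_eq_of_lt (by omega)]
      omega
    · rw [show (x-p).val + (n+1) - k = ((x-p).val - k) + (n+1) by omega, Nat.add_mod_right,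
        Nat.mod_eq_of_lt (by omega)]
      omega
  exact ⟨p, k, k', hk2, hk'2, hsum, hKdef, hK'p, hip, hjp⟩

end Main

/-- heptagonal basic cells: let `y` be dominant covering both
`x = y - χ_K` and `x' = y - χ_{K'}`, where `K, K'` are disjoint arcs, each with at
least two elements, whose union is proper and induces a connected subgraph, and
`i ∈ K`, `j ∈ K'` is the unique adjacent pair. Then the interval of dominant
vectors `[x ⊓ x', y]` has exactly seven elements. -/
theorem stmt_15 (n : ℕ) (hn : 2 ≤ n) (m : ℤ) (hm : 1 ≤ m)
    (y : ZMod (n + 1) → ℤ) (hy : DomA n m y)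
    (K K' : Set (ZMod (n + 1))) (hK : IsArc n K) (hK' : IsArc n K')
    (hK2 : K.Nontrivial) (hK'2 : K'.Nontrivial) (hdisj : K ∩ K' = ∅)
    (hproper : K ∪ K' ≠ Set.univ)
    (hconn : ((cycleG n).induce (K ∪ K')).Connected)
    (i j : ZMod (n + 1))
    (hij : i ∈ K ∧ j ∈ K' ∧ (cycleG n).Adj i j ∧
      ∀ a ∈ K, ∀ b ∈ K', (cycleG n).Adj a b → a = i ∧ b = j)
    (hcovK : CoversA n m (y - chi n K) y) (hcovK' : CoversA n m (y - chi n K') y) :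
    {z | DomA n m z ∧ y - chi n K - chi n K' ≤ z ∧ z ≤ y} =
      {y, y - chi n K, y - chi n K', y - eA n i - eA n j,
        y - chi n K - eA n j, y - chi n K' - eA n i, y - chi n K - chi n K'} ∧
    {z | DomA n m z ∧ y - chi n K - chi n K' ≤ z ∧ z ≤ y}.ncard = 7 := by
  obtain ⟨hiK, hjK, hadj, huniq⟩ := hij
  rcases (cycle_adj.mp hadj).2 with hcase | hcase
  · -- j = i + 1
    obtain ⟨p, k, k', hk, hk', hsum, hKdef, hK'def, hip, hjp⟩ :=
      config hn hK hK' hK2 hK'2 hdisj hproper hiK hjK hcase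
    exact key_lemma hn m y hy p k k' hk hk' hsum K K' hKdef hK'def i j hip hjp hcovK hcovK'
  · -- i = j + 1 : swap the roles of K and K'
    have hdisj2 : K' ∩ K = ∅ := by rw [Set.inter_comm]; exact hdisj
    have hproper2 : K' ∪ K ≠ Set.univ := by rw [Set.union_comm]; exact hproper
    obtain ⟨p, k', k, hk', hk, hsum, hK'def, hKdef, hjp, hip⟩ :=
      config hn hK' hK hK'2 hK2 hdisj2 hproper2 hjK hiK hcase
    have hsum' : k' + k ≤ n := by omega
    have hmain := key_lemma hn m y hy p k' k hk' hk hsum' K' K hK'def hKdef j i hjp hip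
      hcovK' hcovK
    have e1 : y - chi n K' - chi n K = y - chi n K - chi n K' := sub_right_comm _ _ _
    have e2 : y - eA n j - eA n i = y - eA n i - eA n j := sub_right_comm _ _ _
    rw [e1, e2] at hmain
    obtain ⟨hset, hcard⟩ := hmain
    constructor
    · rw [hset]
      ext x
      simp only [Set.mem_insert_iff, Set.mem_singleton_iff]
      tauto
    · exact hcard
end

section
/- If y ∈ ℤ^{n+1} is dominant with v(y) = e_0 + e_n (i.e. the corresponding weight is λ = ω_0 + ω_n up to adding a multiple of δ), then y covers y − 𝟙; that is, in affine type D_{n+1}^{(2)} the weight ω_0 + ω_n covers ω_0 + ω_n − δ in the dominance order on dominant weights. -/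
/-- Cartan matrix of affine type `D_{n+1}^{(2)}`, indexed by `{0, 1, …, n}`:
`A j j = 2`, `A 0 1 = -2`, `A n (n-1) = -2`, `A j (j±1) = -1` for `1 ≤ j ≤ n-1`,
and all other entries `0`. -/
def cartanD2 (n : ℕ) : Matrix (Fin (n + 1)) (Fin (n + 1)) ℤ :=
  Matrix.of fun j k =>
    if j = k then 2
    else if (j : ℕ) = 0 ∧ (k : ℕ) = 1 then -2
    else if (j : ℕ) = n ∧ (k : ℕ) + 1 = n then -2
    else if (j : ℕ) + 1 = (k : ℕ) ∨ (k : ℕ) + 1 = (j : ℕ) then -1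
    else 0

/-- Value of the weight `ω₀ + ωₙ + Σⱼ xⱼ·αⱼ` on the coroot `αⱼ^∨`. -/
def vD (n : ℕ) (x : Fin (n + 1) → ℤ) (j : Fin (n + 1)) : ℤ :=
  (if (j : ℕ) = 0 then 1 else 0) + (if (j : ℕ) = n then 1 else 0) +
    (cartanD2 n).mulVec x j

/-- Dominance of the coefficient vector `x`. -/
def DomD (n : ℕ) (x : Fin (n + 1) → ℤ) : Prop := ∀ j, 0 ≤ vD n x j

/-!
Since `A𝟙 = 0`, the hypothesis `v(y) = e₀ + eₙ` puts `y - 𝟙` in the kernel of `A`, and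
translating by a kernel vector does not change `v`. So it suffices to see that no `0/1`-vector
`e` other than `0` and `𝟙` is dominant. Such an `e` takes the value `0` at some node `j` with a
neighbour `k` where it is `1`; as the off-diagonal entries of `A` are nonpositive,
`v(e)_j ≤ v(0)_j + A_{jk} = -1`.
-/

open Matrix

theorem Fin.exists_castSucc_ne_succ {α : Type*} {n : ℕ} (f : Fin (n + 1) → α) {a b : Fin (n + 1)}
    (h : f a ≠ f b) : ∃ i : Fin n, f i.castSucc ≠ f i.succ := by
  by_contra! hsucc
  have hconst : ∀ i, f i = f 0 := Fin.induction rfl fun i hi => (hsucc i).symm.trans hi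
  exact h ((hconst a).trans (hconst b).symm)

theorem Matrix.mulVec_apply_le_of_offDiag_nonpos {ι R : Type*} [Fintype ι]
    [Ring R] [PartialOrder R] [IsOrderedRing R] {A : Matrix ι ι R}
    (hA : ∀ i k, i ≠ k → A i k ≤ 0) {e : ι → R} (he : 0 ≤ e) {j : ι} (hj : e j = 0) (k : ι) :
    (A *ᵥ e) j ≤ A j k * e k := by
  classical
  rw [mulVec, dotProduct, ← Finset.add_sum_erase _ _ (Finset.mem_univ k)]
  refine add_le_of_nonpos_right (Finset.sum_nonpos fun l _ => ?_)
  obtain rfl | hjl := eq_or_ne j l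
  · simp [hj]
  · exact mul_nonpos_of_nonpos_of_nonneg (hA j l hjl) (he l)

section

variable {n : ℕ}

theorem cartanD2_nonpos_of_ne {j k : Fin (n + 1)} (h : j ≠ k) : cartanD2 n j k ≤ 0 := by
  simp only [cartanD2, of_apply, if_neg h]
  split_ifs <;> omega

theorem cartanD2_mulVec_one (hn : 1 ≤ n) : cartanD2 n *ᵥ 1 = 0 := by
  ext j
  set c : ℤ := if (j : ℕ) = 0 then 0 else if (j : ℕ) = n then -2 else -1
  set d : ℤ := if (j : ℕ) = 0 then -2 else -1
  have hrow : ∀ k : Fin (n + 1), cartanD2 n j k =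
      (if (k : ℕ) = j then 2 else 0) + (if (k : ℕ) = j - 1 then c else 0)
        + (if (k : ℕ) = j + 1 then d else 0) := by
    intro k
    simp only [cartanD2, of_apply, Fin.ext_iff, c, d]
    split_ifs <;> omega
  simp only [mulVec, dotProduct, Pi.one_apply, mul_one, Pi.zero_apply, hrow]
  rw [Fin.sum_univ_eq_sum_range (fun k => (if k = (j : ℕ) then (2 : ℤ) else 0)
    + (if k = j - 1 then c else 0) + (if k = j + 1 then d else 0))]
  simp only [Finset.sum_add_distrib, Finset.sum_ite_eq', Finset.mem_range, c, d]
  split_ifs <;> omega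

theorem vD_eq_vD_zero_add (x : Fin (n + 1) → ℤ) (j : Fin (n + 1)) :
    vD n x j = vD n 0 j + (cartanD2 n *ᵥ x) j := by
  simp [vD]

theorem vD_zero_castSucc_add_cartanD2 (i : Fin n) :
    vD n 0 i.castSucc + cartanD2 n i.castSucc i.succ = -1 := by
  simp only [vD, cartanD2, mulVec_zero, Pi.zero_apply, of_apply, Fin.ext_iff,
    Fin.val_castSucc, Fin.val_succ]
  have := i.isLt
  grind

theorem vD_zero_succ_add_cartanD2 (i : Fin n) :
    vD n 0 i.succ + cartanD2 n i.succ i.castSucc = -1 := by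
  simp only [vD, cartanD2, mulVec_zero, Pi.zero_apply, of_apply, Fin.ext_iff,
    Fin.val_castSucc, Fin.val_succ]
  have := i.isLt
  grind

theorem domD_zero : DomD n 0 := fun j => by
  simp only [vD, mulVec_zero, Pi.zero_apply, add_zero]
  positivity

theorem domD_add_iff {w : Fin (n + 1) → ℤ} (hw : cartanD2 n *ᵥ w = 0) (x : Fin (n + 1) → ℤ) :
    DomD n (x + w) ↔ DomD n x := by
  simp only [DomD, vD_eq_vD_zero_add (x + _), mulVec_add, hw, add_zero, ← vD_eq_vD_zero_add]

theorem vD_neg_of_eq_zero_of_eq_one {e : Fin (n + 1) → ℤ} (he : 0 ≤ e) {j k : Fin (n + 1)}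
    (hj : e j = 0) (hk : e k = 1) (hjk : vD n 0 j + cartanD2 n j k = -1) : vD n e j < 0 := by
  have hle := (cartanD2 n).mulVec_apply_le_of_offDiag_nonpos (fun _ _ => cartanD2_nonpos_of_ne)
    he hj k
  rw [hk, mul_one] at hle
  rw [vD_eq_vD_zero_add]
  omega

theorem not_domD_of_pos_of_lt_one {e : Fin (n + 1) → ℤ} (h0 : 0 < e) (h1 : e < 1) :
    ¬DomD n e := by
  intro hdom
  obtain ⟨a, ha⟩ : ∃ a, 0 < e a := (Pi.lt_def.1 h0).2
  obtain ⟨b, hb⟩ : ∃ b, e b < 1 := (Pi.lt_def.1 h1).2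
  have h01 : ∀ l, e l = 0 ∨ e l = 1 := fun l => by
    have h0l : 0 ≤ e l := h0.le l
    have h1l : e l ≤ 1 := h1.le l
    omega
  obtain ⟨i, hi⟩ := Fin.exists_castSucc_ne_succ e (a := a) (b := b) (by omega)
  rcases h01 i.castSucc with hc | hc <;> rcases h01 i.succ with hs | hs
  · exact hi (hc.trans hs.symm)
  · exact (vD_neg_of_eq_zero_of_eq_one h0.le hc hs (vD_zero_castSucc_add_cartanD2 i)).not_ge
      (hdom _)
  · exact (vD_neg_of_eq_zero_of_eq_one h0.le hs hc (vD_zero_succ_add_cartanD2 i)).not_ge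
      (hdom _)
  · exact hi (hc.trans hs.symm)

end

theorem stmt_16_general (n : ℕ) (hn : 2 ≤ n) (y : Fin (n + 1) → ℤ)
    (hv : ∀ j, vD n y j =
      (if (j : ℕ) = 0 then 1 else 0) + (if (j : ℕ) = n then 1 else 0)) :
    DomD n (y - 1) ∧ y - 1 < y ∧ ¬∃ z, DomD n z ∧ y - 1 < z ∧ z < y := by
  have hy : cartanD2 n *ᵥ y = 0 := funext fun j => by
    have := hv j
    rw [vD_eq_vD_zero_add] at this
    simpa [vD] using this
  have hy1 : cartanD2 n *ᵥ (y - 1) = 0 := by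
    rw [mulVec_sub, hy, cartanD2_mulVec_one (by omega), sub_zero]
  refine ⟨by simpa using (domD_add_iff hy1 0).2 domD_zero, sub_lt_self y one_pos, ?_⟩
  rintro ⟨z, hz, hlow, hhigh⟩
  refine not_domD_of_pos_of_lt_one (sub_pos.2 hlow) ?_ ((domD_add_iff hy1 _).1 ?_)
  · rwa [sub_lt_iff_lt_add', sub_add_cancel]
  · rwa [sub_add_cancel]

/-- in affine type `D_{n+1}^{(2)}`, if `y` is dominant with
`v(y) = e₀ + eₙ` (the weight is `ω₀ + ωₙ` up to a multiple of `δ`), then `y` covers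
`y - 𝟙`, i.e. `ω₀ + ωₙ` covers `ω₀ + ωₙ - δ` in the dominance order. -/
theorem stmt_16 (n : ℕ) (hn : 2 ≤ n) (y : Fin (n + 1) → ℤ) (hy : DomD n y)
    (hv : ∀ j, vD n y j =
      (if (j : ℕ) = 0 then 1 else 0) + (if (j : ℕ) = n then 1 else 0)) :
    DomD n (y - 1) ∧ y - 1 < y ∧ ¬∃ z, DomD n z ∧ y - 1 < z ∧ z < y :=
  stmt_16_general n hn y hv
end
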